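/- Let G be a locally profinite group, K an open subgroup of G, H an open subgroup of K, k a field, and λ a k[H]-module. Suppose (i) End_{k[K]}(ind_H^K λ) = k (the K-intertwining of λ is H), and (ii) for every irreducible k[K]-module ν, if λ embeds in Res_H ν then there is a surjection Res_H ν ↠ λ. Then ind_H^K λ is irreducible. (Vignéras's irreducibility criterion, finite-index abstract version: H ≤ K with [K:H] < ∞, λ irreducible k[H]-module with End_{k[K]}(Ind_H^K λ) = k and the self-duality condition (ii); conclude Ind_H^K λ is an irreducible k[K]-module.) -/

import Mathlib

open Pointwise DirectSum
open scoped DirectSum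

namespace Paper

variable {k : Type} [Field k] {G : Type} [Group G]
variable {V : Type} [AddCommGroup V] [Module k V]

/-- The space of the compactly induced representation `ind_H^G ρ`:
functions `f : G → V` with `f (h * x) = ρ h (f x)` supported on finitely many cosets. -/
def cInd (H : Subgroup G) (ρ : Representation k H V) : Submodule k (G → V) where
  carrier := {f | (∀ (h : H) (x : G), f (↑h * x) = ρ h (f x)) ∧
      ∃ S : Set G, S.Finite ∧ Function.support f ⊆ (H : Set G) * S}
  add_mem' := by
    rintro f g ⟨hf, Sf, hSf, hsf⟩ ⟨hg, Sg, hSg, hsg⟩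
    refine ⟨fun h x => by simp [hf h x, hg h x], Sf ∪ Sg, hSf.union hSg, ?_⟩
    refine (Function.support_add f g).trans ?_
    rw [Set.mul_union]
    exact Set.union_subset_union hsf hsg
  zero_mem' := ⟨fun h x => by simp, ∅, Set.finite_empty, by simp⟩
  smul_mem' := by
    rintro c f ⟨hf, S, hS, hs⟩
    exact ⟨fun h x => by simp [hf h x], S, hS,
      (Function.support_const_smul_subset c f).trans hs⟩

/-- Right translation action on `cInd H ρ`. -/
def cIndAct (H : Subgroup G) (ρ : Representation k H V) (z : G) :
    cInd H ρ →ₗ[k] cInd H ρ where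
  toFun f := ⟨fun x => (f : G → V) (x * z), by
    obtain ⟨hf, S, hS, hs⟩ := f.2
    refine ⟨fun h x => by simpa [mul_assoc] using hf h (x * z),
      S * {z⁻¹}, hS.mul (Set.finite_singleton _), ?_⟩
    intro x hx
    have hx' : (f : G → V) (x * z) ≠ 0 := hx
    rcases hs hx' with ⟨h, hh, s, hsS, heq⟩
    refine ⟨h, hh, s * z⁻¹, Set.mul_mem_mul hsS rfl, ?_⟩
    have : h * s = x * z := heq
    calc h * (s * z⁻¹) = h * s * z⁻¹ := by rw [mul_assoc]
      _ = x * z * z⁻¹ := by rw [this]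
      _ = x := by simp⟩
  map_add' f g := by ext x; rfl
  map_smul' c f := by ext x; rfl

/-- The compactly induced representation of `G` on `cInd H ρ`, by right translation. -/
def cIndRep (H : Subgroup G) (ρ : Representation k H V) :
    Representation k G (cInd H ρ) where
  toFun := cIndAct H ρ
  map_one' := by
    refine LinearMap.ext fun f => Subtype.ext (funext fun x => ?_)
    simp [cIndAct]
  map_mul' z w := by
    refine LinearMap.ext fun f => Subtype.ext (funext fun x => ?_)
    simp [cIndAct, mul_assoc]

/-- The conjugate subgroup `g H g⁻¹`. -/
def conjSubgroup (g : G) (H : Subgroup G) : Subgroup G where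
  carrier := {x | g⁻¹ * x * g ∈ H}
  one_mem' := by simpa using H.one_mem
  mul_mem' := by
    intro a b ha hb
    have h : g⁻¹ * (a * b) * g = (g⁻¹ * a * g) * (g⁻¹ * b * g) := by group
    simp only [Set.mem_setOf_eq] at *
    rw [h]; exact mul_mem ha hb
  inv_mem' := by
    intro a ha
    simp only [Set.mem_setOf_eq] at *
    have h : g⁻¹ * a⁻¹ * g = (g⁻¹ * a * g)⁻¹ := by group
    rw [h]; exact inv_mem ha

lemma conjSubgroup_mono (g : G) {H K : Subgroup G} (h : H ≤ K) :
    conjSubgroup g H ≤ conjSubgroup g K := fun _ hx => h hx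

/-- The isomorphism `g H g⁻¹ → H`, `x ↦ g⁻¹ x g`. -/
def conjHom (g : G) (H : Subgroup G) : conjSubgroup g H →* H where
  toFun x := ⟨g⁻¹ * x * g, x.2⟩
  map_one' := by
    ext
    show g⁻¹ * 1 * g = 1
    group
  map_mul' x y := by
    ext
    show g⁻¹ * (↑x * ↑y) * g = (g⁻¹ * ↑x * g) * (g⁻¹ * ↑y * g)
    group

/-- The conjugate representation `ρᵍ` of `g H g⁻¹`, given by `ρᵍ(x) = ρ(g⁻¹ x g)`. -/
def conjRep (g : G) {H : Subgroup G} (ρ : Representation k H V) :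
    Representation k (conjSubgroup g H) V :=
  ρ.comp (conjHom g H)

/-- Subrepresentation on an invariant submodule. -/
def subRep {Γ : Type} [Group Γ] (ρ : Representation k Γ V) (p : Submodule k V)
    (hp : ∀ (g : Γ) (v : V), v ∈ p → ρ g v ∈ p) : Representation k Γ p where
  toFun g := (ρ g).restrict (fun v hv => hp g v hv)
  map_one' := by
    refine LinearMap.ext fun v => Subtype.ext ?_
    simp [LinearMap.restrict_apply]
  map_mul' g h := by
    refine LinearMap.ext fun v => Subtype.ext ?_
    simp [LinearMap.restrict_apply, map_mul]

/-- `N` is a subquotient of `M` (as `R`-modules). -/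
def IsSubquotient (R : Type*) [Ring R] (M : Type*) [AddCommGroup M] [Module R M]
    (N : Type*) [AddCommGroup N] [Module R N] : Prop :=
  ∃ (W : Submodule R M) (U : Submodule R W), Nonempty ((↥W ⧸ U) ≃ₗ[R] N)

/-- direct sum of a family of representations -/
def dsRep {ι : Type} {Γ : Type} [Group Γ] {W : ι → Type}
    [∀ i, AddCommGroup (W i)] [∀ i, Module k (W i)]
    (ρ : ∀ i, Representation k Γ (W i)) : Representation k Γ (⨁ i, W i) where
  toFun g := DFinsupp.mapRange.linearMap (fun i => ρ i g)
  map_one' := by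
    simp only [map_one]
    exact DFinsupp.mapRange.linearMap_id
  map_mul' g h := by
    simp only [map_mul]
    exact DFinsupp.mapRange.linearMap_comp _ _

/-- stabilizer of a subspace -/
def stab (ρ : Representation k G V) (p : Submodule k V) : Subgroup G where
  carrier := {g | Submodule.map (ρ g) p = p}
  one_mem' := by
    show Submodule.map (ρ 1) p = p
    rw [map_one, Module.End.one_eq_id, Submodule.map_id]
  mul_mem' := by
    intro a b ha hb
    simp only [Set.mem_setOf_eq] at *
    rw [map_mul, Module.End.mul_eq_comp, Submodule.map_comp, hb, ha]
  inv_mem' := by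
    intro a ha
    simp only [Set.mem_setOf_eq] at *
    conv_lhs => rw [← ha]
    rw [← Submodule.map_comp, ← Module.End.mul_eq_comp, ← map_mul, inv_mul_cancel, map_one,
      Module.End.one_eq_id, Submodule.map_id]

lemma stab_mem {ρ : Representation k G V} {p : Submodule k V} {g : G}
    (hg : g ∈ stab ρ p) {v : V} (hv : v ∈ p) : ρ g v ∈ p :=
  hg ▸ Submodule.mem_map_of_mem hv

/-- twist of a representation by a character -/
def twist (ρ : Representation k G V) (χ : G →* kˣ) : Representation k G V where
  toFun g := (χ g : k) • ρ g
  map_one' := by simp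
  map_mul' g h := by
    simp only [map_mul, Units.val_mul]
    rw [smul_mul_smul_comm]


/-- Restriction of a representation to a subgroup. -/
def resRep (H : Subgroup G) (ρ : Representation k G V) : Representation k H V :=
  ρ.comp H.subtype

end Paper

/-!
Pick `v ≠ 0` in `λ` and let `δ v ∈ π = Ind_H^K λ` be the function supported on `H` with
`δ v 1 = v`. Since `λ` is irreducible, the translates of `δ v` span `π`, so `π` is cyclic. For a
simple `k[K]`-module `ν` and a nonzero `q : π → ν`, the map `w ↦ q (δ w)` is a nonzero
`k[H]`-map `λ → Res ν`, so by (ii) there is a nonzero `g : Res ν → λ`. As `[K : H]` is finite,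
Frobenius reciprocity turns `g` into a nonzero `k[K]`-map `ν → π`, `u ↦ (x ↦ g (x • u))`.
Taking `ν = π / m` for a maximal submodule `m`, the composite `π → π / m → π` is a nonzero
endomorphism, hence by (i) a nonzero scalar, hence injective; so `m = 0` and `π` is irreducible.
-/

open MonoidAlgebra

universe u w in
theorem isSimpleModule_of_forall_isSimpleModule_hom_ne_zero {R : Type*} {M : Type u} [Ring R]
    [AddCommGroup M] [Module R M] [Module.Finite R M] [Nontrivial M]
    (hinj : ∀ f : Module.End R M, f ≠ 0 → Function.Injective f)
    (hback : ∀ (N : Type max u w) [AddCommGroup N] [Module R N], IsSimpleModule R N →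
      (∃ q : M →ₗ[R] N, q ≠ 0) → ∃ F : N →ₗ[R] M, F ≠ 0) :
    IsSimpleModule R M := by
  obtain ⟨m, hm⟩ := IsCoatomic.exists_coatom (α := Submodule R M)
  have : IsSimpleModule R (M ⧸ m) := (isSimpleModule_iff_isCoatom).mpr hm
  let q : M →ₗ[R] ULift.{w} (M ⧸ m) := ULift.moduleEquiv.symm.toLinearMap ∘ₗ m.mkQ
  have hq_surj : Function.Surjective q := ULift.moduleEquiv.symm.surjective.comp m.mkQ_surjective
  have hq : q ≠ 0 := fun h => hm.1 (by simpa [q] using congr(LinearMap.ker $h))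
  obtain ⟨F, hF⟩ := hback _ (IsSimpleModule.congr ULift.moduleEquiv) ⟨q, hq⟩
  have hFq : F ∘ₗ q ≠ 0 := by
    rwa [← LinearMap.zero_comp q, Ne, LinearMap.cancel_right hq_surj]
  have hm_bot : m = ⊥ := eq_bot_iff.mpr fun x hx =>
    hinj _ hFq (by simp [q, (Submodule.Quotient.mk_eq_zero m).mpr hx])
  exact (isSimpleModule_iff R M).mpr (isSimpleOrder_iff_isCoatom_bot.mpr (hm_bot ▸ hm))

lemma Representation.injective_of_forall_eq_single_one_smul {k G V : Type*} [Field k] [Monoid G]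
    [AddCommGroup V] [Module k V] {ρ : Representation k G V}
    {f : Module.End (MonoidAlgebra k G) ρ.asModule} {c : k}
    (hc : ∀ v, f v = single (1 : G) c • v) (hf : f ≠ 0) : Function.Injective f := by
  have hc' (v : ρ.asModule) : f v = c • v := by simp [hc]; rfl
  have hc0 : c ≠ 0 := fun h => hf (LinearMap.ext fun v => by simp [hc', h])
  intro v w hvw
  exact smul_right_injective _ hc0 (by simpa [hc'] using hvw)

namespace Paper

universe u

variable {k : Type} [Field k] {G : Type} [Group G] {V : Type} [AddCommGroup V] [Module k V]
  {H : Subgroup G} {ρ : Representation k H V}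

lemma cInd_apply_mul (f : cInd H ρ) (h : H) (x : G) :
    (f : G → V) (h * x) = ρ h ((f : G → V) x) :=
  f.2.1 h x

lemma cIndRep_apply (z : G) (f : cInd H ρ) (x : G) :
    (cIndRep H ρ z f : G → V) x = (f : G → V) (x * z) :=
  rfl

open Classical in
variable (ρ) in
noncomputable def cIndDelta : V →ₗ[k] cInd H ρ where
  toFun w := ⟨fun x => if hx : x ∈ H then ρ ⟨x, hx⟩ w else 0, by
    refine ⟨fun h x => ?_, {1}, Set.finite_singleton 1, fun x hx => ?_⟩
    · by_cases hx : x ∈ H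
      · simp only [hx, mul_mem h.2 hx, dif_pos, ← Module.End.mul_apply, ← map_mul]
        rfl
      · simp [hx, Subgroup.mul_mem_cancel_left]
    · by_contra hxH
      simp_all⟩
  map_add' w w' := by ext x; by_cases hx : x ∈ H <;> simp [hx]
  map_smul' c w := by ext x; by_cases hx : x ∈ H <;> simp [hx]

open Classical in
lemma cIndDelta_apply (w : V) (x : G) :
    (cIndDelta ρ w : G → V) x = if hx : x ∈ H then ρ ⟨x, hx⟩ w else 0 :=
  rfl

@[simp]
lemma cIndDelta_apply_one (w : V) : (cIndDelta ρ w : G → V) 1 = w := by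
  rw [cIndDelta_apply, dif_pos H.one_mem]
  exact congr($(map_one ρ) w)

lemma cIndDelta_injective : Function.Injective (cIndDelta ρ) :=
  fun w w' h => by simpa using congr(($h : G → V) 1)

lemma cIndDelta_rho (h : H) (w : V) : cIndDelta ρ (ρ h w) = cIndRep H ρ h (cIndDelta ρ w) := by
  ext x
  by_cases hx : x ∈ H
  · simp only [cIndDelta_apply, cIndRep_apply, hx, mul_mem hx h.2, dif_pos,
      ← Module.End.mul_apply, ← map_mul]
    rfl
  · simp [cIndDelta_apply, cIndRep_apply, hx, Subgroup.mul_mem_cancel_right, h.2]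

open Classical in
lemma cIndRep_inv_cIndDelta_apply (f : cInd H ρ) (a x : G) :
    (cIndRep H ρ a⁻¹ (cIndDelta ρ ((f : G → V) a)) : G → V) x =
      if x * a⁻¹ ∈ H then (f : G → V) x else 0 := by
  rw [cIndRep_apply, cIndDelta_apply]
  split_ifs with hx
  · rw [← cInd_apply_mul]
    simp
  · rfl

/-- `cIndRep H ρ a⁻¹ (cIndDelta ρ (f a))` is the restriction of `f` to the coset `H a`. -/
lemma support_sub_cIndRep_inv_cIndDelta_subset {f : cInd H ρ} {a : G} {S : Set G}
    (hf : Function.support (f : G → V) ⊆ (H : Set G) * insert a S) :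
    Function.support
        ((f - cIndRep H ρ a⁻¹ (cIndDelta ρ ((f : G → V) a)) : cInd H ρ) : G → V) ⊆
      (H : Set G) * S := by
  intro x hx
  have hxa : x * a⁻¹ ∉ H := fun hxa => hx (by simp [cIndRep_inv_cIndDelta_apply, hxa])
  have hfx : (f : G → V) x ≠ 0 := by
    simpa [Submodule.coe_sub, cIndRep_inv_cIndDelta_apply, hxa] using hx
  obtain ⟨h, hh, s, hs, rfl⟩ := hf hfx
  rcases Set.mem_insert_iff.mp hs with rfl | hsS
  · exact absurd (by simpa using hh) hxa
  · exact Set.mul_mem_mul hh hsS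

lemma mem_of_forall_cIndDelta_mem (P : Subrepresentation (cIndRep H ρ))
    (hP : ∀ w, cIndDelta ρ w ∈ P) (f : cInd H ρ) : f ∈ P := by
  obtain ⟨-, S, hS, hsupp⟩ := f.2
  induction S, hS using Set.Finite.induction_on generalizing f with
  | empty =>
    have : f = 0 := Subtype.ext (Function.support_eq_empty_iff.mp (by simpa using hsupp))
    exact this ▸ P.toSubmodule.zero_mem
  | @insert a S _ _ ih =>
    rw [← sub_add_cancel f (cIndRep H ρ a⁻¹ (cIndDelta ρ ((f : G → V) a)))]
    exact P.toSubmodule.add_mem (ih _ (support_sub_cIndRep_inv_cIndDelta_subset hsupp))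
      (P.apply_mem_toSubmodule a⁻¹ (hP _))

lemma cIndDelta_asAlgebraHom (a : MonoidAlgebra k H) (w : V) :
    cIndDelta ρ (ρ.asAlgebraHom a w) =
      (cIndRep H ρ).asAlgebraHom (mapDomainRingHom k H.subtype a) (cIndDelta ρ w) := by
  induction a using MonoidAlgebra.induction_linear with
  | zero => simp
  | add a b ha hb => simp only [map_add, LinearMap.add_apply, ha, hb]
  | single h c => simp [mapDomainRingHom, cIndDelta_rho]

lemma span_cIndDelta_eq_top [IsSimpleModule (MonoidAlgebra k H) ρ.asModule] {v : V}
    (hv : v ≠ 0) :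
    Submodule.span (MonoidAlgebra k G) {(cIndRep H ρ).asModuleEquiv.symm (cIndDelta ρ v)} = ⊤ := by
  set N := Submodule.span (MonoidAlgebra k G) {(cIndRep H ρ).asModuleEquiv.symm (cIndDelta ρ v)}
  have hδ (w : V) : cIndDelta ρ w ∈ Subrepresentation.ofSubmodule' N := by
    obtain ⟨a, ha⟩ := (Submodule.span_singleton_eq_top_iff _ _).mp
      (IsSimpleModule.span_singleton_eq_top (MonoidAlgebra k H) (m := ρ.asModuleEquiv.symm v) hv)
      (ρ.asModuleEquiv.symm w)
    have hw : w = ρ.asAlgebraHom a v := by simpa using congr(ρ.asModuleEquiv $ha).symm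
    rw [Subrepresentation.mem_ofSubmodule'_iff, hw, cIndDelta_asAlgebraHom]
    exact N.smul_mem _ (Submodule.mem_span_singleton_self _)
  exact eq_top_iff.mpr fun f _ => mem_of_forall_cIndDelta_mem _ hδ f

noncomputable abbrev resModule (H : Subgroup G) (N : ModuleCat.{u} (MonoidAlgebra k G)) :
    ModuleCat.{u} (MonoidAlgebra k H) :=
  (ModuleCat.restrictScalars (mapDomainRingHom k H.subtype)).obj N

variable {N : ModuleCat.{u} (MonoidAlgebra k G)}

lemma resModule_map_single_smul (g : resModule H N →ₗ[MonoidAlgebra k H] ρ.asModule) (h : H)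
    (c : k) (u : N) : g (single (h : G) c • u) = c • ρ h (g u) := by
  have hsingle : mapDomainRingHom k H.subtype (single h c) = single (h : G) c := mapDomain_single
  rw [← hsingle]
  exact (g.map_smul (single h c) u).trans (Representation.single_smul ρ c h (g u))

noncomputable def cIndDeltaComp (q : (cIndRep H ρ).asModule →ₗ[MonoidAlgebra k G] N) :
    ρ.asModule →ₗ[MonoidAlgebra k H] resModule H N where
  toFun w := q ((cIndRep H ρ).asModuleEquiv.symm (cIndDelta ρ (ρ.asModuleEquiv w)))
  map_add' w w' := by simp only [map_add]; rfl
  map_smul' a w := by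
    rw [Representation.asModuleEquiv_map_smul, cIndDelta_asAlgebraHom]
    exact q.map_smul (mapDomainRingHom k H.subtype a) _

section FiniteIndex

variable [H.FiniteIndex]

lemma cIndLift_mem (g : resModule H N →ₗ[MonoidAlgebra k H] ρ.asModule) (u : N) :
    (fun x => ρ.asModuleEquiv (g (single x (1 : k) • u : N))) ∈ cInd H ρ := by
  obtain ⟨T, hT, -⟩ := H.exists_isComplement_right 1
  refine ⟨fun h x => ?_, T, hT.finite_right, by rw [hT.mul_eq]; exact Set.subset_univ _⟩
  have hmul : single ((h : G) * x) (1 : k) = single (h : G) 1 * single x 1 := by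
    rw [single_mul_single, one_mul]
  change ρ.asModuleEquiv (g (single ((h : G) * x) (1 : k) • u : N)) = _
  rw [hmul, mul_smul, resModule_map_single_smul, one_smul]
  rfl

noncomputable def cIndLiftAddHom (g : resModule H N →ₗ[MonoidAlgebra k H] ρ.asModule) :
    N →+ cInd H ρ where
  toFun u := ⟨_, cIndLift_mem g u⟩
  map_zero' := by
    ext x
    change ρ.asModuleEquiv (g (single x (1 : k) • 0 : N)) = 0
    rw [smul_zero]
    exact congrArg ρ.asModuleEquiv (map_zero g)
  map_add' u u' := by
    ext x
    change ρ.asModuleEquiv (g (single x (1 : k) • (u + u') : N)) = _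
    rw [smul_add]
    exact congrArg ρ.asModuleEquiv (map_add g _ _)

lemma cIndLiftAddHom_apply (g : resModule H N →ₗ[MonoidAlgebra k H] ρ.asModule) (u : N) (x : G) :
    (cIndLiftAddHom g u : G → V) x = ρ.asModuleEquiv (g (single x (1 : k) • u : N)) :=
  rfl

lemma cIndLiftAddHom_smul (g : resModule H N →ₗ[MonoidAlgebra k H] ρ.asModule)
    (a : MonoidAlgebra k G) (u : N) :
    cIndLiftAddHom g (a • u) = (cIndRep H ρ).asAlgebraHom a (cIndLiftAddHom g u) := by
  induction a using MonoidAlgebra.induction_linear with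
  | zero => simp
  | add a b ha hb => simp only [add_smul, map_add, LinearMap.add_apply, ha, hb]
  | single z c =>
    ext x
    have hmul : single x (1 : k) * single z c = single ((1 : H) : G) c * single (x * z) 1 := by
      simp [single_mul_single]
    rw [Representation.asAlgebraHom_single, cIndLiftAddHom_apply, ← mul_smul, hmul, mul_smul,
      resModule_map_single_smul, map_one]
    rfl

noncomputable def cIndLift (g : resModule H N →ₗ[MonoidAlgebra k H] ρ.asModule) :
    N →ₗ[MonoidAlgebra k G] (cIndRep H ρ).asModule where
  toFun u := (cIndRep H ρ).asModuleEquiv.symm (cIndLiftAddHom g u)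
  map_add' u u' := by simp
  map_smul' a u := by simp only [cIndLiftAddHom_smul]; rfl

lemma cIndLift_apply_one (g : resModule H N →ₗ[MonoidAlgebra k H] ρ.asModule) (u : N) :
    ((cIndRep H ρ).asModuleEquiv (cIndLift g u) : G → V) 1 = g u := by
  change ρ.asModuleEquiv (g (single 1 (1 : k) • u : N)) = _
  rw [← MonoidAlgebra.one_def, one_smul]
  rfl

lemma cIndLift_ne_zero {g : resModule H N →ₗ[MonoidAlgebra k H] ρ.asModule}
    (hg : g ≠ 0) : cIndLift g ≠ 0 := by
  obtain ⟨u, hu⟩ := DFunLike.ne_iff.mp hg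
  refine fun h => hu ((cIndLift_apply_one g u).symm.trans ?_)
  rw [h]
  rfl

end FiniteIndex

end Paper

open Paper

/-- Vignéras's irreducibility criterion, finite-index abstract
version: let `H ≤ K` be of finite index, `k` a field, `λ` an irreducible
`k[H]`-module and `π = Ind_H^K λ`.  Assume
(1) `End_{k[K]}(π) = k` (every `k[K]`-endomorphism of `π` is a scalar), and
(2) for every irreducible `k[K]`-module `ν`, if `Hom_{k[H]}(λ, Res_H ν) ≠ 0` then
`Hom_{k[H]}(Res_H ν, λ) ≠ 0`.
Then `π = Ind_H^K λ` is irreducible. -/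
theorem stmt18 {k : Type} [Field k] {K : Type} [Group K]
    (H : Subgroup K) [H.FiniteIndex]
    {W : Type} [AddCommGroup W] [Module k W] (lam : Representation k H W)
    (hlam : IsSimpleModule (MonoidAlgebra k H) lam.asModule)
    (hEnd : ∀ f : Representation.asModule (cIndRep H lam) →ₗ[MonoidAlgebra k K]
        Representation.asModule (cIndRep H lam),
      ∃ c : k, ∀ v, f v = (MonoidAlgebra.single (1 : K) c) • v)
    (hdual : ∀ ν : ModuleCat (MonoidAlgebra k K), IsSimpleModule (MonoidAlgebra k K) ν →
      (∃ f : lam.asModule →ₗ[MonoidAlgebra k H]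
          ((ModuleCat.restrictScalars (MonoidAlgebra.mapDomainRingHom k H.subtype)).obj ν),
        f ≠ 0) →
      (∃ g : ((ModuleCat.restrictScalars (MonoidAlgebra.mapDomainRingHom k H.subtype)).obj ν)
          →ₗ[MonoidAlgebra k H] lam.asModule, g ≠ 0)) :
    IsSimpleModule (MonoidAlgebra k K) (Representation.asModule (cIndRep H lam)) := by
  have := hlam
  have := IsSimpleModule.nontrivial (MonoidAlgebra k H) lam.asModule
  obtain ⟨v, hv⟩ := exists_ne (0 : lam.asModule)
  have hspan := span_cIndDelta_eq_top (ρ := lam) hv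
  set δv := (cIndRep H lam).asModuleEquiv.symm (cIndDelta lam v)
  have : Module.Finite (MonoidAlgebra k K) (cIndRep H lam).asModule :=
    ⟨⟨{δv}, by simpa using hspan⟩⟩
  have : Nontrivial (cIndRep H lam).asModule :=
    nontrivial_of_ne δv 0 fun h => hv (cIndDelta_injective
      ((congrArg (cIndRep H lam).asModuleEquiv h).trans (map_zero (cIndDelta lam)).symm))
  refine isSimpleModule_of_forall_isSimpleModule_hom_ne_zero
    (fun f hf => Representation.injective_of_forall_eq_single_one_smul (hEnd f).choose_spec hf)
    fun N _ _ hN ⟨q, hq⟩ => ?_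
  have hqδ : q δv ≠ 0 := fun h => hq (LinearMap.ext_on hspan (by simpa using h))
  obtain ⟨g, hg⟩ := hdual (ModuleCat.of _ N) hN ⟨cIndDeltaComp q, fun h => hqδ congr($h v)⟩
  exact ⟨cIndLift g, cIndLift_ne_zero hg⟩
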